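/- arXiv:2405.15043 — 2 statements merged into one kernel-verified Lean document; each statement's English description precedes it below -/
import Mathlib

section
/- For α, β > -1, κ a positive integer, and nonnegative integer n, the bivariate Jacobi–Konhauser polynomial P_n^{(α,β),κ}(x,y) := (Γ(1+α+n)/n!) Σ_{s=0}^{n} Σ_{r=0}^{n-s} [(-n)_{s+r} (1+α+β+n)_s / (s! r! Γ(1+α+s) Γ(β+1+κr))] ((1-x)/2)^s y^{κr} can be rewritten as Γ(1+α+n) Σ_{s=0}^{n} [(-1)^s (1+α+β+n)_s / (s! Γ(1+α+s) Γ(1+β+κn-κs))] ((1-x)/2)^s Z_{n-s}^{β}(y;κ), where Z_m^{β}(y;κ) := (Γ(1+β+κm)/m!) Σ_{r=0}^{m} (-m)_r y^{κr} / (r! Γ(β+1+κr)) is the Konhauser polynomial. -/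
/-- Pochhammer symbol (rising factorial) on ℝ. -/
noncomputable def poch (a : ℝ) (k : ℕ) : ℝ := ∏ i ∈ Finset.range k, (a + i)

/-- Konhauser polynomial Z_m^β(y;κ). -/
noncomputable def konhauserZ (β : ℝ) (κ m : ℕ) (y : ℝ) : ℝ :=
  (Real.Gamma (1 + β + κ * m) / m.factorial) *
    ∑ r ∈ Finset.range (m + 1),
      poch (-(m : ℝ)) r * y ^ (κ * r) / (r.factorial * Real.Gamma (β + 1 + κ * r))

/-- Bivariate Jacobi–Konhauser polynomial. -/
noncomputable def JK (α β : ℝ) (κ n : ℕ) (x y : ℝ) : ℝ :=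
  (Real.Gamma (1 + α + n) / n.factorial) *
    ∑ s ∈ Finset.range (n + 1), ∑ r ∈ Finset.range (n - s + 1),
      poch (-(n : ℝ)) (s + r) * poch (1 + α + β + n) s /
          (s.factorial * r.factorial * Real.Gamma (1 + α + s) * Real.Gamma (β + 1 + κ * r)) *
        ((1 - x) / 2) ^ s * y ^ (κ * r)

/-! Splitting the Pochhammer symbol as `(-n)_{s+r} = (-n)_s (-(n-s))_r` with
`(-n)_s = (-1)^s n!/(n-s)!` turns the inner sum over `r` of the `s`-th term into the Konhauser
polynomial `Z_{n-s}^β`, up to the factor `Γ(1+β+κ(n-s))/(n-s)!`, which is invertible since `β > -1`. -/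

lemma poch_add (a : ℝ) (s r : ℕ) : poch a (s + r) = poch a s * poch (a + s) r := by
  simp only [poch, Finset.prod_range_add, Nat.cast_add, add_assoc]

lemma poch_neg_natCast (n s : ℕ) : poch (-n) s = (-1) ^ s * n.descFactorial s := by
  rw [← descPochhammer_eval_eq_descFactorial ℝ, descPochhammer_eval_eq_prod_range, poch]
  simpa [neg_add_eq_sub] using Finset.prod_neg (s := Finset.range s) fun i : ℕ => (n - i : ℝ)

lemma poch_neg_natCast_add {n s : ℕ} (h : s ≤ n) (r : ℕ) :
    poch (-n) (s + r) = (-1) ^ s * n.factorial / (n - s).factorial * poch (-(n - s : ℕ)) r := by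
  rw [poch_add, poch_neg_natCast, ← Nat.factorial_mul_descFactorial h, Nat.cast_sub h, Nat.cast_mul,
    neg_sub', sub_neg_eq_add]
  field_simp

theorem stmt0_general (α β : ℝ) (hβ : -1 < β) (κ : ℕ) (n : ℕ)
    (x y : ℝ) :
    JK α β κ n x y =
      Real.Gamma (1 + α + n) *
        ∑ s ∈ Finset.range (n + 1),
          (-1 : ℝ) ^ s * poch (1 + α + β + n) s /
              (s.factorial * Real.Gamma (1 + α + s) * Real.Gamma (1 + β + κ * (n - s))) *
            ((1 - x) / 2) ^ s * konhauserZ β κ (n - s) y := by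
  rw [JK, Finset.mul_sum, Finset.mul_sum]
  refine Finset.sum_congr rfl fun s hs => ?_
  have hsn : s ≤ n := Finset.mem_range_succ_iff.mp hs
  have hΓ : Real.Gamma (1 + β + κ * (n - s : ℕ)) ≠ 0 := by
    have : (0 : ℝ) ≤ κ * (n - s : ℕ) := by positivity
    exact (Real.Gamma_pos_of_pos (by linarith)).ne'
  rw [konhauserZ, ← Nat.cast_sub hsn]
  simp only [Finset.mul_sum]
  refine Finset.sum_congr rfl fun r _ => ?_
  rw [poch_neg_natCast_add hsn]
  -- otherwise `field_simp` normalises the argument of `Γ` and no longer matches `hΓ`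
  generalize Real.Gamma (1 + β + κ * (n - s : ℕ)) = g at hΓ ⊢
  field_simp

theorem stmt0 (α β : ℝ) (hα : -1 < α) (hβ : -1 < β) (κ : ℕ) (hκ : 1 ≤ κ) (n : ℕ)
    (x y : ℝ) :
    JK α β κ n x y =
      Real.Gamma (1 + α + n) *
        ∑ s ∈ Finset.range (n + 1),
          (-1 : ℝ) ^ s * poch (1 + α + β + n) s /
              (s.factorial * Real.Gamma (1 + α + s) * Real.Gamma (1 + β + κ * (n - s))) *
            ((1 - x) / 2) ^ s * konhauserZ β κ (n - s) y :=
  stmt0_general α β hβ κ n x y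
end

section
/- Let α, β, γ₁, γ₂, w₁, w₂, δ, σ ∈ ℂ with Re(α), Re(β), Re(δ), Re(σ) > 0, κ a positive integer, |w₂/σ| < 1, |w₁ σ^κ/(δ(σ^κ - w₂^κ))| sufficiently small, and suppose γ₁ is a nonpositive integer (so the ₂F₀ series terminates). Then ∫_{-∞}^y ∫_{-∞}^x (x-t)^{α-1}(y-u)^{β-1} E_{α,β,κ}^{(γ₁;γ₂)}(w₁(x-t), w₂(y-u)) e^{δt + σu} dt du = δ^{-α} σ^{-β} e^{δx + σy} (1 - (w₂/σ)^κ)^{-γ₁} Σ_{s} (γ₁)_s (γ₂)_s / s! · (σ^κ w₁/(δ(σ^κ - w₂^κ)))^s. -/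
open MeasureTheory

/-- Pochhammer symbol (rising factorial) on ℂ. -/
noncomputable def pochC (a : ℂ) (k : ℕ) : ℂ := ∏ i ∈ Finset.range k, (a + i)

/-- Bivariate Jacobi–Konhauser Mittag-Leffler function (κ a natural number). -/
noncomputable def JKML (α β γ₁ γ₂ : ℂ) (κ : ℕ) (x y : ℂ) : ℂ :=
  ∑' s : ℕ, ∑' r : ℕ,
    pochC γ₁ (r + s) * pochC γ₂ s * x ^ s * y ^ (κ * r) /
      (r.factorial * s.factorial * Complex.Gamma (α + s) * Complex.Gamma (β + κ * r))

open Set Complex Filter Topology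

/-!
For `γ₁ = -n` the Pochhammer factor `(γ₁)_{r+s}` vanishes once `r + s > n`, so the
Mittag-Leffler function is a polynomial and the double integral can be taken term by term.
Each term is a product of two Riemann–Liouville integrals of exponentials,
`∫_{-∞}^x (x-t)^{a-1} e^{dt} dt = d^{-a} Γ(a) e^{dx}`, whose Gamma factors cancel the ones in
the series. Splitting `(-n)_{r+s} = (-n)_s (s-n)_r`, the sum over `r` is the binomial expansion
of `(1 - (w₂/σ)^κ)^{n-s}`, which leaves the terminating `₂F₀` series on the right.
-/

lemma pochC_eq_eval_ascPochhammer (a : ℂ) (k : ℕ) : pochC a k = (ascPochhammer ℂ k).eval a := by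
  induction k with
  | zero => simp [pochC]
  | succ k ih => rw [pochC, Finset.prod_range_succ, ← pochC, ih, ascPochhammer_succ_eval]

lemma pochC_add (a : ℂ) (s r : ℕ) : pochC a (s + r) = pochC a s * pochC (a + s) r := by
  simp only [pochC, Finset.prod_range_add, Nat.cast_add, add_assoc]

lemma pochC_neg_nat (n k : ℕ) : pochC (-(n : ℂ)) k = (-1) ^ k * n.descFactorial k := by
  rw [pochC_eq_eval_ascPochhammer, ascPochhammer_eval_neg_eq_descPochhammer,
    descPochhammer_eval_eq_descFactorial]

lemma pochC_neg_nat_of_lt {n k : ℕ} (h : n < k) : pochC (-(n : ℂ)) k = 0 := by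
  simp [pochC_neg_nat, Nat.descFactorial_eq_zero_iff_lt.mpr h]

lemma sum_range_pochC_neg_nat_mul_pow_div_factorial {m N : ℕ} (h : m ≤ N) (z : ℂ) :
    ∑ r ∈ Finset.range (N + 1), pochC (-(m : ℂ)) r * z ^ r / r.factorial = (1 - z) ^ m := by
  rw [← Finset.sum_range_add_sum_Ico _ (by omega : m + 1 ≤ N + 1),
    Finset.sum_eq_zero (s := Finset.Ico _ _)
      fun r hr => by simp [pochC_neg_nat_of_lt (Finset.mem_Ico.1 hr).1],
    add_zero, sub_eq_neg_add, add_pow]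
  refine Finset.sum_congr rfl fun r _ => ?_
  rw [pochC_neg_nat, Nat.descFactorial_eq_factorial_mul_choose]
  have : (r.factorial : ℂ) ≠ 0 := by exact_mod_cast r.factorial_ne_zero
  push_cast
  field_simp
  ring

lemma sum_sum_pochC_neg_nat_add (n : ℕ) (b : ℕ → ℂ) {A z : ℂ} (hz : 1 - z ≠ 0) :
    ∑ s ∈ Finset.range (n + 1), ∑ r ∈ Finset.range (n + 1),
        pochC (-(n : ℂ)) (r + s) * b s / (r.factorial * s.factorial) * A ^ s * z ^ r =
      (1 - z) ^ n * ∑ s ∈ Finset.range (n + 1),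
        pochC (-(n : ℂ)) s * b s / s.factorial * (A / (1 - z)) ^ s := by
  rw [Finset.mul_sum]
  refine Finset.sum_congr rfl fun s hs => ?_
  have hsn : s ≤ n := Nat.lt_succ_iff.1 (Finset.mem_range.1 hs)
  have hshift : -(n : ℂ) + s = -((n - s : ℕ) : ℂ) := by push_cast [Nat.cast_sub hsn]; ring
  have hsplit : (1 - z) ^ n = (1 - z) ^ (n - s) * (1 - z) ^ s := by
    rw [← pow_add, Nat.sub_add_cancel hsn]
  calc _ = pochC (-(n : ℂ)) s * b s / s.factorial * A ^ s *
        ∑ r ∈ Finset.range (n + 1), pochC (-((n - s : ℕ) : ℂ)) r * z ^ r / r.factorial := by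
        rw [Finset.mul_sum]
        refine Finset.sum_congr rfl fun r _ => ?_
        rw [add_comm r s, pochC_add, hshift]
        field_simp
    _ = _ := by
        rw [sum_range_pochC_neg_nat_mul_pow_div_factorial (Nat.sub_le n s), hsplit, div_pow]
        field_simp

lemma continuousOn_cpow_mul_exp_neg_mul (z d : ℂ) :
    ContinuousOn (fun t : ℝ => (t : ℂ) ^ z * cexp (-(d * t))) (Ioi 0) :=
  ContinuousOn.mul (fun t ht => (continuousAt_ofReal_cpow_const t z
    (Or.inr (ne_of_gt ht))).continuousWithinAt) (by fun_prop)

lemma integrableOn_cpow_mul_exp_neg_mul {z d : ℂ} (hz : -1 < z.re) (hd : 0 < d.re) :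
    IntegrableOn (fun t : ℝ => (t : ℂ) ^ z * cexp (-(d * t))) (Ioi 0) := by
  have hbound : IntegrableOn (fun t : ℝ => t ^ z.re * Real.exp (-(d.re * t))) (Ioi 0) := by
    simpa using integrableOn_rpow_mul_exp_neg_mul_rpow (p := 1) hz one_pos hd
  refine hbound.mono'
    ((continuousOn_cpow_mul_exp_neg_mul z d).aestronglyMeasurable measurableSet_Ioi) ?_
  filter_upwards [self_mem_ae_restrict measurableSet_Ioi] with t ht
  simp [norm_cpow_eq_rpow_re_of_pos ht, Complex.norm_exp]

lemma differentiableAt_integral_cpow_mul_exp_neg_mul {a d₀ : ℂ} (ha : 0 < a.re)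
    (hd₀ : 0 < d₀.re) :
    DifferentiableAt ℂ (fun d : ℂ => ∫ t in Ioi (0 : ℝ), (t : ℂ) ^ (a - 1) * cexp (-(d * t)))
      d₀ := by
  set ε := d₀.re / 2 with hε_def
  have hε : 0 < ε := half_pos hd₀
  have hre : ∀ d ∈ Metric.ball d₀ ε, ε ≤ d.re := fun d hd => by
    have := (abs_le.1 ((abs_re_le_norm (d - d₀)).trans (mem_ball_iff_norm.1 hd).le)).1
    simp only [sub_re] at this
    linarith
  have hderiv : ∀ t : ℝ, 0 < t → ∀ d : ℂ, HasDerivAt (fun d : ℂ => (t : ℂ) ^ (a - 1) *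
      cexp (-(d * t))) (-((t : ℂ) ^ a * cexp (-(d * t)))) d := by
    intro t ht d
    refine ((((hasDerivAt_id d).mul_const (t : ℂ)).neg.cexp).const_mul
      ((t : ℂ) ^ (a - 1))).congr_deriv ?_
    have ht0 : (t : ℂ) ≠ 0 := ofReal_ne_zero.2 ht.ne'
    rw [cpow_sub _ _ ht0, cpow_one]
    field_simp
    simp
  refine (hasDerivAt_integral_of_dominated_loc_of_deriv_le (Metric.ball_mem_nhds d₀ hε)
    (F' := fun d t => -((t : ℂ) ^ a * cexp (-(d * t))))
    (Eventually.of_forall fun d => (continuousOn_cpow_mul_exp_neg_mul (a - 1) d).aestronglyMeasurable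
      measurableSet_Ioi)
    (integrableOn_cpow_mul_exp_neg_mul (by simp; linarith) hd₀)
    (integrableOn_cpow_mul_exp_neg_mul (by linarith) hd₀).aestronglyMeasurable.neg
    ?_ (integrableOn_cpow_mul_exp_neg_mul (z := a) (d := ε) (by linarith) (by simpa)).norm
    ?_).2.differentiableAt
  · filter_upwards [self_mem_ae_restrict measurableSet_Ioi] with t ht d hd
    rw [norm_neg, norm_mul, norm_mul, norm_exp, norm_exp]
    refine mul_le_mul_of_nonneg_left (Real.exp_le_exp.2 ?_) (norm_nonneg _)
    simpa using mul_le_mul_of_nonneg_right (hre d hd) ht.le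
  · filter_upwards [self_mem_ae_restrict measurableSet_Ioi] with t ht d _
    exact hderiv t ht d

-- Analytic continuation in `d` from the real case `Complex.integral_cpow_mul_exp_neg_mul_Ioi`.
theorem integral_cpow_mul_exp_neg_mul_Ioi_of_re_pos {a d : ℂ} (ha : 0 < a.re) (hd : 0 < d.re) :
    ∫ t in Ioi (0 : ℝ), (t : ℂ) ^ (a - 1) * cexp (-(d * t)) = d ^ (-a) * Gamma a := by
  set F := fun d : ℂ => ∫ t in Ioi (0 : ℝ), (t : ℂ) ^ (a - 1) * cexp (-(d * t))
  set G := fun d : ℂ => d ^ (-a) * Gamma a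
  set U : Set ℂ := {d | 0 < d.re}
  have hU : IsOpen U := isOpen_lt continuous_const continuous_re
  have hF : AnalyticOnNhd ℂ F U := DifferentiableOn.analyticOnNhd (fun d hd =>
    (differentiableAt_integral_cpow_mul_exp_neg_mul ha hd).differentiableWithinAt) hU
  have hG : AnalyticOnNhd ℂ G U := DifferentiableOn.analyticOnNhd (fun d hd =>
    ((differentiableAt_id.cpow_const (Or.inl hd)).mul_const _).differentiableWithinAt) hU
  have hreal : ∀ r : ℝ, 0 < r → F r = G r := fun r hr => by
    simp only [F, G, integral_cpow_mul_exp_neg_mul_Ioi ha hr, one_div, cpow_neg]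
    rw [inv_cpow _ _ (by simp [arg_ofReal_of_nonneg hr.le, Real.pi_ne_zero.symm])]
  have hfreq : ∃ᶠ d in 𝓝[≠] (1 : ℂ), F d = G d := by
    have hmaps : Tendsto (fun r : ℝ => (r : ℂ)) (𝓝[>] (1 : ℝ)) (𝓝[≠] 1) :=
      continuous_ofReal.continuousWithinAt.tendsto_nhdsWithin fun r hr => by
        simpa using hr.ne'
    have hev : ∀ᶠ r : ℝ in 𝓝[>] 1, F r = G r :=
      eventually_nhdsWithin_of_forall fun r hr => hreal r (one_pos.trans hr)
    exact hmaps.frequently hev.frequently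
  exact hF.eqOn_of_preconnected_of_frequently_eq hG (convex_halfSpace_re_gt 0).isPreconnected
    (by simp [U]) hfreq hd

lemma preimage_sub_left_Ioi_zero (x : ℝ) : (fun t : ℝ => x - t) ⁻¹' Ioi 0 = Iio x := by
  ext t
  simp

lemma integral_Iio_comp_sub_left {E : Type*} [NormedAddCommGroup E] [NormedSpace ℝ E]
    (f : ℝ → E) (x : ℝ) : ∫ t in Iio x, f (x - t) = ∫ v in Ioi 0, f v := by
  rw [← preimage_sub_left_Ioi_zero,
    (Measure.measurePreserving_sub_left volume x).setIntegral_preimage_emb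
      (Homeomorph.subLeft x).measurableEmbedding]

lemma integrableOn_Iio_comp_sub_left_iff {E : Type*} [NormedAddCommGroup E] (f : ℝ → E)
    (x : ℝ) : IntegrableOn (fun t => f (x - t)) (Iio x) ↔ IntegrableOn f (Ioi 0) := by
  rw [← preimage_sub_left_Ioi_zero]
  exact (Measure.measurePreserving_sub_left volume x).integrableOn_comp_preimage
    (Homeomorph.subLeft x).measurableEmbedding

lemma sub_cpow_mul_exp_eq_exp_mul (a d : ℂ) (x t : ℝ) :
    ((x : ℂ) - t) ^ (a - 1) * cexp (d * t) =
      cexp (d * x) * (((x - t : ℝ) : ℂ) ^ (a - 1) * cexp (-(d * (x - t : ℝ)))) := by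
  rw [mul_left_comm, ← exp_add]
  push_cast
  ring_nf

lemma integrableOn_Iio_sub_cpow_mul_exp {a d : ℂ} (ha : 0 < a.re) (hd : 0 < d.re) (x : ℝ) :
    IntegrableOn (fun t : ℝ => ((x : ℂ) - t) ^ (a - 1) * cexp (d * t)) (Iio x) := by
  simp only [sub_cpow_mul_exp_eq_exp_mul a d x]
  refine ((integrableOn_Iio_comp_sub_left_iff (fun v : ℝ => (v : ℂ) ^ (a - 1) *
    cexp (-(d * v))) x).2 (integrableOn_cpow_mul_exp_neg_mul ?_ hd)).const_mul _
  simpa using ha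

lemma integral_Iio_sub_cpow_mul_exp {a d : ℂ} (ha : 0 < a.re) (hd : 0 < d.re) (x : ℝ) :
    ∫ t in Iio x, ((x : ℂ) - t) ^ (a - 1) * cexp (d * t) = d ^ (-a) * Gamma a * cexp (d * x) := by
  simp only [sub_cpow_mul_exp_eq_exp_mul a d x]
  rw [integral_const_mul, integral_Iio_comp_sub_left (fun v : ℝ => (v : ℂ) ^ (a - 1) *
    cexp (-(d * v))), integral_cpow_mul_exp_neg_mul_Ioi_of_re_pos ha hd, mul_comm]

lemma integral_integral_sum_sum_mul {X Y ι ι' : Type*} [MeasurableSpace X] [MeasurableSpace Y]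
    {μ : Measure X} {ν : Measure Y} (S : Finset ι) (T : Finset ι') (c : ι → ι' → ℂ)
    {f : ι → X → ℂ} {g : ι' → Y → ℂ} (hf : ∀ i, Integrable (f i) μ)
    (hg : ∀ j, Integrable (g j) ν) :
    ∫ y, ∫ x, ∑ i ∈ S, ∑ j ∈ T, c i j * f i x * g j y ∂μ ∂ν =
      ∑ i ∈ S, ∑ j ∈ T, c i j * (∫ x, f i x ∂μ) * ∫ y, g j y ∂ν := by
  have hinner : ∀ y, ∫ x, ∑ i ∈ S, ∑ j ∈ T, c i j * f i x * g j y ∂μ =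
      ∑ i ∈ S, ∑ j ∈ T, c i j * (∫ x, f i x ∂μ) * g j y := fun y => by
    rw [integral_finsetSum _ fun i _ => integrable_finsetSum _ fun j _ =>
      ((hf i).const_mul _).mul_const _]
    refine Finset.sum_congr rfl fun i _ => ?_
    rw [integral_finsetSum _ fun j _ => ((hf i).const_mul _).mul_const _]
    simp only [integral_mul_const, integral_const_mul]
  simp only [hinner]
  rw [integral_finsetSum _ fun i _ => integrable_finsetSum _ fun j _ => (hg j).const_mul _]
  refine Finset.sum_congr rfl fun i _ => ?_
  rw [integral_finsetSum _ fun j _ => (hg j).const_mul _]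
  simp only [integral_const_mul]

lemma JKML_neg_nat (α β γ₂ : ℂ) (κ n : ℕ) (X Y : ℂ) :
    JKML α β (-(n : ℂ)) γ₂ κ X Y = ∑ s ∈ Finset.range (n + 1), ∑ r ∈ Finset.range (n + 1),
      pochC (-(n : ℂ)) (r + s) * pochC γ₂ s * X ^ s * Y ^ (κ * r) /
        (r.factorial * s.factorial * Gamma (α + s) * Gamma (β + κ * r)) := by
  have hvanish : ∀ r s : ℕ, n < r + s → pochC (-(n : ℂ)) (r + s) * pochC γ₂ s * X ^ s *
      Y ^ (κ * r) / (r.factorial * s.factorial * Gamma (α + s) * Gamma (β + κ * r)) = 0 :=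
    fun r s h => by simp [pochC_neg_nat_of_lt h]
  rw [JKML, tsum_congr fun s => tsum_eq_sum (s := Finset.range (n + 1)) fun r hr =>
    hvanish r s (by simp at hr; omega)]
  exact tsum_eq_sum fun s hs => Finset.sum_eq_zero fun r _ => hvanish r s (by simp at hs; omega)

lemma cpow_sub_one_mul_pow {b : ℂ} (hb : b ≠ 0) (c : ℂ) (k : ℕ) :
    b ^ (c - 1) * b ^ k = b ^ (c + k - 1) := by
  rw [add_sub_right_comm, cpow_add _ _ hb, cpow_natCast]

lemma cpow_neg_add_natCast {b : ℂ} (hb : b ≠ 0) (c : ℂ) (k : ℕ) :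
    b ^ (-(c + k)) = b ^ (-c) / b ^ k := by
  rw [neg_add, cpow_add _ _ hb, cpow_neg b k, cpow_natCast, div_eq_mul_inv]

lemma cpow_mul_cpow_mul_JKML_neg_nat (α β γ₂ w₁ w₂ : ℂ) (κ n : ℕ) {A B : ℂ} (hA : A ≠ 0)
    (hB : B ≠ 0) (E F : ℂ) :
    A ^ (α - 1) * B ^ (β - 1) * JKML α β (-(n : ℂ)) γ₂ κ (w₁ * A) (w₂ * B) * (E * F) =
      ∑ s ∈ Finset.range (n + 1), ∑ r ∈ Finset.range (n + 1),
        pochC (-(n : ℂ)) (r + s) * pochC γ₂ s * w₁ ^ s * w₂ ^ (κ * r) /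
          (r.factorial * s.factorial * Gamma (α + s) * Gamma (β + κ * r)) *
          (A ^ (α + s - 1) * E) * (B ^ (β + κ * r - 1) * F) := by
  rw [JKML_neg_nat, Finset.mul_sum, Finset.sum_mul]
  refine Finset.sum_congr rfl fun s _ => ?_
  rw [Finset.mul_sum, Finset.sum_mul]
  refine Finset.sum_congr rfl fun r _ => ?_
  rw [← cpow_sub_one_mul_pow hA, show β + κ * r - 1 = β + ((κ * r : ℕ) : ℂ) - 1 by push_cast; ring,
    ← cpow_sub_one_mul_pow hB]
  ring

theorem integral_Iio_integral_Iio_JKML_neg_nat {α β δ σ : ℂ} (γ₂ w₁ w₂ : ℂ) (κ n : ℕ)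
    (hα : 0 < α.re) (hβ : 0 < β.re) (hδ : 0 < δ.re) (hσ : 0 < σ.re) (x y : ℝ) :
    (∫ u in Iio y, ∫ t in Iio x, ((x : ℂ) - t) ^ (α - 1) * ((y : ℂ) - u) ^ (β - 1) *
        JKML α β (-(n : ℂ)) γ₂ κ (w₁ * ((x : ℂ) - t)) (w₂ * ((y : ℂ) - u)) *
        cexp (δ * t + σ * u)) =
      δ ^ (-α) * σ ^ (-β) * cexp (δ * x + σ * y) *
        ∑ s ∈ Finset.range (n + 1), ∑ r ∈ Finset.range (n + 1),
          pochC (-(n : ℂ)) (r + s) * pochC γ₂ s / (r.factorial * s.factorial) *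
            (w₁ / δ) ^ s * ((w₂ / σ) ^ κ) ^ r := by
  have hreα : ∀ s : ℕ, 0 < (α + s).re := fun s => by
    simpa using add_pos_of_pos_of_nonneg hα s.cast_nonneg
  have hreβ : ∀ r : ℕ, 0 < (β + κ * r).re := fun r => by
    simpa using add_pos_of_pos_of_nonneg hβ (by positivity : (0 : ℝ) ≤ κ * r)
  set c : ℕ → ℕ → ℂ := fun s r => pochC (-(n : ℂ)) (r + s) * pochC γ₂ s * w₁ ^ s *
    w₂ ^ (κ * r) / (r.factorial * s.factorial * Gamma (α + s) * Gamma (β + κ * r))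
  calc _ = ∫ u in Iio y, ∫ t in Iio x, ∑ s ∈ Finset.range (n + 1), ∑ r ∈ Finset.range (n + 1),
        c s r * (((x : ℂ) - t) ^ (α + s - 1) * cexp (δ * t)) *
          (((y : ℂ) - u) ^ (β + κ * r - 1) * cexp (σ * u)) := by
        refine setIntegral_congr_fun measurableSet_Iio fun u hu =>
          setIntegral_congr_fun measurableSet_Iio fun t ht => ?_
        rw [exp_add]
        exact cpow_mul_cpow_mul_JKML_neg_nat α β γ₂ w₁ w₂ κ n
          (sub_ne_zero.2 (by exact_mod_cast (mem_Iio.1 ht).ne'))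
          (sub_ne_zero.2 (by exact_mod_cast (mem_Iio.1 hu).ne')) _ _
    _ = ∑ s ∈ Finset.range (n + 1), ∑ r ∈ Finset.range (n + 1),
        c s r * (δ ^ (-(α + s)) * Gamma (α + s) * cexp (δ * x)) *
          (σ ^ (-(β + κ * r)) * Gamma (β + κ * r) * cexp (σ * y)) := by
        rw [integral_integral_sum_sum_mul _ _ _
          (fun s => integrableOn_Iio_sub_cpow_mul_exp (hreα s) hδ x)
          (fun r => integrableOn_Iio_sub_cpow_mul_exp (hreβ r) hσ y)]
        simp only [integral_Iio_sub_cpow_mul_exp (hreα _) hδ,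
          integral_Iio_sub_cpow_mul_exp (hreβ _) hσ]
    _ = _ := by
        have hδ0 : δ ≠ 0 := fun h => by simp [h] at hδ
        have hσ0 : σ ≠ 0 := fun h => by simp [h] at hσ
        rw [Finset.mul_sum]
        refine Finset.sum_congr rfl fun s _ => ?_
        rw [Finset.mul_sum]
        refine Finset.sum_congr rfl fun r _ => ?_
        have := Gamma_ne_zero_of_re_pos (hreα s)
        have := Gamma_ne_zero_of_re_pos (hreβ r)
        have : (r.factorial : ℂ) ≠ 0 := by exact_mod_cast r.factorial_ne_zero
        have : (s.factorial : ℂ) ≠ 0 := by exact_mod_cast s.factorial_ne_zero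
        have hσpow := cpow_neg_add_natCast hσ0 β (κ * r)
        push_cast at hσpow
        rw [cpow_neg_add_natCast hδ0, hσpow, ← pow_mul, div_pow, div_pow, exp_add]
        simp only [c]
        field_simp

theorem stmt13_general (α β γ₁ γ₂ w₁ w₂ δ σ : ℂ) (κ : ℕ) (hκ : 1 ≤ κ)
    (hα : 0 < α.re) (hβ : 0 < β.re) (hδ : 0 < δ.re) (hσ : 0 < σ.re)
    (h1 : ‖w₂ / σ‖ < 1)
    (hγ₁ : ∃ n : ℕ, γ₁ = -(n : ℂ)) (x y : ℝ) :
    (∫ u in Set.Iio y, ∫ t in Set.Iio x,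
        ((x : ℂ) - t) ^ (α - 1) * ((y : ℂ) - u) ^ (β - 1) *
          JKML α β γ₁ γ₂ κ (w₁ * ((x : ℂ) - t)) (w₂ * ((y : ℂ) - u)) *
          Complex.exp (δ * t + σ * u)) =
      δ ^ (-α) * σ ^ (-β) * Complex.exp (δ * x + σ * y) *
        (1 - (w₂ / σ) ^ κ) ^ (-γ₁) *
        ∑' s : ℕ, pochC γ₁ s * pochC γ₂ s / s.factorial *
          (σ ^ κ * w₁ / (δ * (σ ^ κ - w₂ ^ κ))) ^ s := by
  obtain ⟨n, rfl⟩ := hγ₁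
  have hσκ : σ ^ κ ≠ 0 := pow_ne_zero _ fun h => by simp [h] at hσ
  have hz : 1 - (w₂ / σ) ^ κ ≠ 0 := by
    refine sub_ne_zero.2 fun h => (pow_lt_one₀ (norm_nonneg _) h1 (by omega : κ ≠ 0)).ne ?_
    rw [← norm_pow, ← h, norm_one]
  have hW : σ ^ κ * w₁ / (δ * (σ ^ κ - w₂ ^ κ)) = w₁ / δ / (1 - (w₂ / σ) ^ κ) := by
    rw [div_pow, one_sub_div hσκ, div_div_div_eq]
    ring
  rw [integral_Iio_integral_Iio_JKML_neg_nat γ₂ w₁ w₂ κ n hα hβ hδ hσ,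
    sum_sum_pochC_neg_nat_add n _ hz, neg_neg, cpow_natCast, hW,
    tsum_eq_sum (s := Finset.range (n + 1)) fun s hs => by
      simp [pochC_neg_nat_of_lt (by simpa using hs : n < s)]]
  ring

theorem stmt13 (α β γ₁ γ₂ w₁ w₂ δ σ : ℂ) (κ : ℕ) (hκ : 1 ≤ κ)
    (hα : 0 < α.re) (hβ : 0 < β.re) (hδ : 0 < δ.re) (hσ : 0 < σ.re)
    (h1 : ‖w₂ / σ‖ < 1)
    (h2 : ‖w₁ * σ ^ κ / (δ * (σ ^ κ - w₂ ^ κ))‖ < 1)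
    (hγ₁ : ∃ n : ℕ, γ₁ = -(n : ℂ)) (x y : ℝ) :
    (∫ u in Set.Iio y, ∫ t in Set.Iio x,
        ((x : ℂ) - t) ^ (α - 1) * ((y : ℂ) - u) ^ (β - 1) *
          JKML α β γ₁ γ₂ κ (w₁ * ((x : ℂ) - t)) (w₂ * ((y : ℂ) - u)) *
          Complex.exp (δ * t + σ * u)) =
      δ ^ (-α) * σ ^ (-β) * Complex.exp (δ * x + σ * y) *
        (1 - (w₂ / σ) ^ κ) ^ (-γ₁) *
        ∑' s : ℕ, pochC γ₁ s * pochC γ₂ s / s.factorial *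
          (σ ^ κ * w₁ / (δ * (σ ^ κ - w₂ ^ κ))) ^ s :=
  stmt13_general α β γ₁ γ₂ w₁ w₂ δ σ κ hκ hα hβ hδ hσ h1 hγ₁ x y
end
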